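/- arXiv:2504.03445 — 2 statements merged into one kernel-verified Lean document; each statement's English description precedes it below -/
import Mathlib

section
/- Let α ∈ (0,1) and A, B, C > 0. For m > 0 let y_m solve the ODE y_m'(t) = A + B·y_m(t)^α − m·y_m(t) with y_m(0) = C. Then y_m(t) > 0 for all t ≥ 0, and for every fixed t > 0, limsup_{m→∞} m·y_m(t) < ∞. In fact, for m sufficiently large, y_m(t) ≤ 2(A+B)/m + C·e^{−mt/2}. -/
open Filter

open Set Real in
private lemma ode_pos_aux (α A B m : ℝ) (hα : α ∈ Set.Ioo (0:ℝ) 1)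
    (hA : 0 < A) (f : ℝ → ℝ) (hf0 : 0 < f 0)
    (hode : ∀ t ≥ (0:ℝ), HasDerivAt f (A + B * (f t) ^ α - m * f t) t) :
    ∀ t ≥ (0:ℝ), 0 < f t := by
  by_contra h
  push_neg at h
  obtain ⟨t, ht, hft⟩ := h
  set S : Set ℝ := {s | 0 ≤ s ∧ f s ≤ 0} with hS
  have hSne : S.Nonempty := ⟨t, ht, hft⟩
  have hbdd : BddBelow S := ⟨0, fun s hs => hs.1⟩
  set t₀ := sInf S with ht₀def
  have ht₀0 : 0 ≤ t₀ := le_csInf hSne fun s hs => hs.1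
  have hne : (nhdsWithin t₀ S).NeBot :=
    mem_closure_iff_nhdsWithin_neBot.mp (csInf_mem_closure hSne hbdd)
  have hft₀le : f t₀ ≤ 0 := by
    have hcw : ContinuousWithinAt f S t₀ := (hode t₀ ht₀0).continuousAt.continuousWithinAt
    refine le_of_tendsto hcw.tendsto ?_
    exact Filter.eventually_of_mem self_mem_nhdsWithin fun s hs => hs.2
  have hev : ∀ᶠ s in nhds (0:ℝ), 0 < f s :=
    (hode 0 le_rfl).continuousAt.eventually_mem (lt_mem_nhds hf0) |>.mono fun s hs => hs
  obtain ⟨ε, hε, hball⟩ := Metric.eventually_nhds_iff.mp hev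
  have ht₀pos : 0 < t₀ := by
    have : ε ≤ t₀ := le_csInf hSne fun s hs => by
      by_contra hlt
      push_neg at hlt
      have : 0 < f s := hball (by rw [Real.dist_eq, sub_zero, abs_of_nonneg hs.1]; exact hlt)
      linarith [hs.2]
    linarith
  have hIco : ∀ s ∈ Ico (0:ℝ) t₀, 0 < f s := by
    intro s hs
    have : s ∉ S := notMem_of_lt_csInf hs.2 hbdd
    by_contra hcon
    push_neg at hcon
    exact this ⟨hs.1, hcon⟩
  have hne2 : (nhdsWithin t₀ (Ico (0:ℝ) t₀)).NeBot := by
    rw [← mem_closure_iff_nhdsWithin_neBot, closure_Ico (ne_of_lt ht₀pos)]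
    exact ⟨ht₀0, le_rfl⟩
  have hft₀ge : 0 ≤ f t₀ := by
    have hcw : ContinuousWithinAt f (Ico (0:ℝ) t₀) t₀ :=
      (hode t₀ ht₀0).continuousAt.continuousWithinAt
    refine ge_of_tendsto hcw.tendsto ?_
    exact Filter.eventually_of_mem self_mem_nhdsWithin fun s hs => (hIco s hs).le
  have hft₀ : f t₀ = 0 := le_antisymm hft₀le hft₀ge
  have hd : HasDerivAt f A t₀ := by
    have := hode t₀ ht₀0
    rwa [hft₀, Real.zero_rpow (ne_of_gt hα.1), mul_zero, mul_zero, sub_zero, add_zero] at this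
  have hdw : HasDerivWithinAt f A (Ico (0:ℝ) t₀) t₀ := hd.hasDerivWithinAt
  have hslope := hasDerivWithinAt_iff_tendsto_slope.mp hdw
  have hdiff : Ico (0:ℝ) t₀ \ {t₀} = Ico (0:ℝ) t₀ := by
    apply Set.diff_singleton_eq_self
    simp [Set.mem_Ico]
  rw [hdiff] at hslope
  have hA0 : A ≤ 0 := by
    refine le_of_tendsto hslope ?_
    refine Filter.eventually_of_mem self_mem_nhdsWithin fun s hs => ?_
    have h1 : 0 < f s := hIco s hs
    have h2 : s - t₀ < 0 := by linarith [hs.2]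
    rw [slope_def_field, hft₀]
    exact div_nonpos_of_nonneg_of_nonpos (by linarith) h2.le
  linarith

private lemma rpow_le_one_add_aux (α x : ℝ) (hα : α ∈ Set.Ioo (0:ℝ) 1) (hx : 0 ≤ x) :
    x ^ α ≤ 1 + x := by
  rcases le_or_gt x 1 with h | h
  · have := Real.rpow_le_one hx h hα.1.le
    linarith
  · have := Real.rpow_le_rpow_of_exponent_le h.le hα.2.le
    rw [Real.rpow_one] at this
    linarith

open Set Real in
private lemma ode_bound_aux (α A B C m : ℝ) (hα : α ∈ Set.Ioo (0:ℝ) 1)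
    (hA : 0 < A) (hB : 0 < B) (hC : 0 < C) (hm : 2 * B + 1 ≤ m)
    (f : ℝ → ℝ) (hf0 : f 0 = C)
    (hode : ∀ t ≥ (0:ℝ), HasDerivAt f (A + B * (f t) ^ α - m * f t) t)
    (hpos : ∀ t ≥ (0:ℝ), 0 ≤ f t) :
    ∀ t ≥ (0:ℝ), f t ≤ 2 * (A + B) / m + C * Real.exp (-m * t / 2) := by
  have hm0 : 0 < m := by linarith
  set k : ℝ := m - B with hk
  have hk0 : 0 < k := by simp [hk]; linarith
  set a : ℝ := A + B with ha
  have ha0 : 0 < a := by simp [ha]; linarith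
  set u : ℝ → ℝ := fun s => (f s - a / k) * Real.exp (k * s) with hu
  have hud : ∀ s ≥ (0:ℝ), HasDerivAt u
      ((A + B * (f s) ^ α - m * f s) * Real.exp (k * s)
        + (f s - a / k) * (Real.exp (k * s) * k)) s := by
    intro s hs
    have hexp : HasDerivAt (fun s => Real.exp (k * s)) (Real.exp (k * s) * k) s := by
      simpa using ((hasDerivAt_id s).const_mul k).exp
    exact ((hode s hs).sub_const (a / k)).mul hexp
  have hud_le : ∀ s > (0:ℝ), deriv u s ≤ 0 := by
    intro s hs
    rw [(hud s hs.le).deriv]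
    have h1 : (f s) ^ α ≤ 1 + f s := rpow_le_one_add_aux α (f s) hα (hpos s hs.le)
    have h2 : (0:ℝ) < Real.exp (k * s) := Real.exp_pos _
    have h3 : (a / k) * k = a := div_mul_cancel₀ a (ne_of_gt hk0)
    have key : (A + B * (f s) ^ α - m * f s) + (f s - a / k) * k ≤ 0 := by
      have h4 : (f s - a / k) * k = f s * k - a := by rw [sub_mul, h3]
      have h5 : B * (f s) ^ α ≤ B * (1 + f s) := mul_le_mul_of_nonneg_left h1 hB.le
      rw [h4, hk, ha]
      nlinarith [h5]
    calc (A + B * (f s) ^ α - m * f s) * Real.exp (k * s)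
          + (f s - a / k) * (Real.exp (k * s) * k)
        = ((A + B * (f s) ^ α - m * f s) + (f s - a / k) * k) * Real.exp (k * s) := by ring
      _ ≤ 0 := mul_nonpos_of_nonpos_of_nonneg key h2.le
  have hanti : AntitoneOn u (Ici (0:ℝ)) := by
    apply antitoneOn_of_deriv_nonpos (convex_Ici 0)
    · exact fun s hs => ((hud s hs).continuousAt).continuousWithinAt
    · intro s hs
      rw [interior_Ici] at hs
      exact ((hud s (le_of_lt hs)).differentiableAt).differentiableWithinAt
    · intro s hs
      rw [interior_Ici] at hs
      exact hud_le s hs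
  intro t ht
  have hut : u t ≤ u 0 := hanti (self_mem_Ici) ht ht
  have hu0 : u 0 = C - a / k := by simp [hu, hf0]
  have hE : (0:ℝ) < Real.exp (k * t) := Real.exp_pos _
  rw [hu0] at hut
  simp only [hu] at hut
  have hak : 0 ≤ a / k := by positivity
  have h4 : f t - a / k ≤ (C - a / k) / Real.exp (k * t) :=
    (le_div_iff₀ hE).mpr hut
  have h5 : (C - a / k) / Real.exp (k * t) ≤ C / Real.exp (k * t) :=
    (div_le_div_iff_of_pos_right hE).mpr (by linarith)
  have step1 : f t ≤ a / k + C / Real.exp (k * t) := by linarith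
  have h6 : a / k ≤ 2 * (A + B) / m := by
    rw [div_le_div_iff₀ hk0 hm0, ha, hk]
    nlinarith
  have h7 : C / Real.exp (k * t) ≤ C * Real.exp (-m * t / 2) := by
    rw [div_eq_mul_inv, ← Real.exp_neg]
    apply mul_le_mul_of_nonneg_left _ hC.le
    apply Real.exp_le_exp.mpr
    rw [hk]
    nlinarith
  linarith

/-- Collapsing lemma for the ODE `y' = A + B y^α - m y`, `y(0) = C`, with
`α ∈ (0,1)` and `A, B, C > 0`: solutions stay positive, for large `m` one has
`y_m(t) ≤ 2(A+B)/m + C e^{-mt/2}`, and hence for each fixed `t > 0`,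
`limsup_{m→∞} m y_m(t) < ∞`. -/
theorem ode_collapsing_bound
    (α A B C : ℝ) (hα : α ∈ Set.Ioo (0:ℝ) 1)
    (hA : 0 < A) (hB : 0 < B) (hC : 0 < C)
    (y : ℝ → ℝ → ℝ)
    (hy0 : ∀ m > (0:ℝ), y m 0 = C)
    (hyode : ∀ m > (0:ℝ), ∀ t ≥ (0:ℝ),
      HasDerivAt (y m) (A + B * (y m t) ^ α - m * y m t) t) :
    (∀ m > (0:ℝ), ∀ t ≥ (0:ℝ), 0 < y m t) ∧
    (∃ m₀ > (0:ℝ), ∀ m ≥ m₀, ∀ t ≥ (0:ℝ),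
      y m t ≤ 2 * (A + B) / m + C * Real.exp (-m * t / 2)) ∧
    (∀ t > (0:ℝ), ∃ M : ℝ, ∀ᶠ m in atTop, m * y m t ≤ M) := by
  have hpos : ∀ m > (0:ℝ), ∀ t ≥ (0:ℝ), 0 < y m t := by
    intro m hm
    exact ode_pos_aux α A B m hα hA (y m)
      (by rw [hy0 m hm]; exact hC) (hyode m hm)
  have hbnd : ∀ m, 2 * B + 1 ≤ m → ∀ t ≥ (0:ℝ),
      y m t ≤ 2 * (A + B) / m + C * Real.exp (-m * t / 2) := by
    intro m hm
    have hm0 : 0 < m := by linarith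
    exact ode_bound_aux α A B C m hα hA hB hC hm (y m) (hy0 m hm0)
      (hyode m hm0) (fun t ht => (hpos m hm0 t ht).le)
  refine ⟨hpos, ⟨2 * B + 1, by linarith, fun m hm t ht => hbnd m hm t ht⟩, ?_⟩
  intro t ht
  refine ⟨2 * (A + B) + C * (2 / t), ?_⟩
  filter_upwards [eventually_ge_atTop (2 * B + 1)] with m hm
  have hm0 : 0 < m := by linarith
  have hy := hbnd m hm t ht.le
  have hmul : m * y m t ≤ m * (2 * (A + B) / m + C * Real.exp (-m * t / 2)) :=
    mul_le_mul_of_nonneg_left hy hm0.le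
  have hid : m * (2 * (A + B) / m) = 2 * (A + B) :=
    mul_div_cancel₀ _ (ne_of_gt hm0)
  have hexp : m * (C * Real.exp (-m * t / 2)) ≤ C * (2 / t) := by
    set E : ℝ := Real.exp (m * t / 2) with hE
    have hEpos : 0 < E := Real.exp_pos _
    have hEeq : Real.exp (-m * t / 2) = E⁻¹ := by
      rw [hE, ← Real.exp_neg]
      ring_nf
    have hx : m * t / 2 + 1 ≤ E := Real.add_one_le_exp _
    have hprod : (m * t / 2) * E⁻¹ ≤ E * E⁻¹ :=
      mul_le_mul_of_nonneg_right (by linarith) (by positivity)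
    rw [mul_inv_cancel₀ (ne_of_gt hEpos)] at hprod
    have hEinv : 0 < E⁻¹ := by positivity
    rw [hEeq]
    -- from hprod : (m * t / 2) * E⁻¹ ≤ 1, get m * E⁻¹ ≤ 2 / t, then scale by C
    have h8 : m * E⁻¹ ≤ 2 / t := by
      rw [le_div_iff₀ ht]
      nlinarith
    nlinarith [mul_le_mul_of_nonneg_left h8 hC.le]
  calc m * y m t ≤ m * (2 * (A + B) / m + C * Real.exp (-m * t / 2)) := hmul
    _ = 2 * (A + B) + m * (C * Real.exp (-m * t / 2)) := by rw [mul_add, hid]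
    _ ≤ 2 * (A + B) + C * (2 / t) := by linarith
end

section
/- Let x : [0,∞) → [0,∞) be differentiable and satisfy the differential inequality x'(t) ≤ A + B·x(t)^{3/4} − c·√N·x(t) with x(0) ≤ C, where A, B, C, c > 0. Let y_N solve y' = A + B·y^{3/4} − c√N·y, y(0) = C. Then x(t) ≤ y_N(t) for all t ≥ 0, and consequently sup_N √N · x_N(t) < ∞ for each fixed t > 0 if x = x_N satisfies the inequality uniformly in N. -/
open Set

/-- Concavity-type estimate for `t ↦ t^{3/4}`. -/
lemma aux_rpow_concave {a b : ℝ} (hb : 0 < b) (hab : b ≤ a) :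
    a ^ ((3:ℝ)/4) ≤ b ^ ((3:ℝ)/4) + 3 / (4 * b ^ ((1:ℝ)/4)) * (a - b) := by
  have ha : 0 < a := lt_of_lt_of_le hb hab
  set u := a ^ ((1:ℝ)/4) with hu
  set v := b ^ ((1:ℝ)/4) with hv
  have hu0 : 0 < u := Real.rpow_pos_of_pos ha _
  have hv0 : 0 < v := Real.rpow_pos_of_pos hb _
  have huv : v ≤ u := Real.rpow_le_rpow hb.le hab (by norm_num)
  have hu4 : u ^ (4:ℕ) = a := by
    rw [hu, ← Real.rpow_natCast (a ^ ((1:ℝ)/4)) 4, ← Real.rpow_mul ha.le]; norm_num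
  have hv4 : v ^ (4:ℕ) = b := by
    rw [hv, ← Real.rpow_natCast (b ^ ((1:ℝ)/4)) 4, ← Real.rpow_mul hb.le]; norm_num
  have hu3 : u ^ (3:ℕ) = a ^ ((3:ℝ)/4) := by
    rw [hu, ← Real.rpow_natCast (a ^ ((1:ℝ)/4)) 3, ← Real.rpow_mul ha.le]; norm_num
  have hv3 : v ^ (3:ℕ) = b ^ ((3:ℝ)/4) := by
    rw [hv, ← Real.rpow_natCast (b ^ ((1:ℝ)/4)) 3, ← Real.rpow_mul hb.le]; norm_num
  rw [← hu3, ← hv3, ← hu4, ← hv4, ← sub_nonneg]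
  have hid : v ^ (3:ℕ) + 3 / (4 * v) * (u ^ (4:ℕ) - v ^ (4:ℕ)) - u ^ (3:ℕ)
      = ((u - v)^2 * (3*u^2 + 2*u*v + v^2)) / (4*v) := by
    field_simp
    ring
  rw [hid]
  positivity

lemma aux_rpow_le_one_add {X : ℝ} (hX : 0 ≤ X) : X ^ ((3:ℝ)/4) ≤ 1 + X := by
  rcases le_total X 1 with h | h
  · have := Real.rpow_le_one hX h (by norm_num : (0:ℝ) ≤ 3/4)
    linarith
  · have h2 : X ^ ((3:ℝ)/4) ≤ X ^ (1:ℝ) :=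
      Real.rpow_le_rpow_of_exponent_le h (by norm_num)
    rw [Real.rpow_one] at h2
    linarith

/-- Barrier: solution of the ODE stays above `min C (A/(cs+1))`. -/
lemma aux_barrier (A B c s C : ℝ) (hA : 0 < A) (hB : 0 ≤ B) (hC : 0 < C) (hcs : 0 ≤ c * s)
    (y : ℝ → ℝ) (hy0 : y 0 = C)
    (hy : ∀ t ≥ (0:ℝ), HasDerivAt y (A + B * (y t) ^ ((3:ℝ)/4) - c * s * y t) t) :
    ∀ t ≥ (0:ℝ), min C (A / (c * s + 1)) ≤ y t := by
  intro T hT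
  set m := min C (A / (c*s+1)) with hm
  have hd : (0:ℝ) < c * s + 1 := by linarith
  have hm0 : 0 < m := lt_min hC (div_pos hA hd)
  have key : ∀ ⦃u⦄, u ∈ Set.Icc (0:ℝ) T → -(y u) ≤ (fun _ : ℝ => -m) u := by
    apply image_le_of_deriv_right_lt_deriv_boundary'
      (f := fun u => -(y u))
      (f' := fun u => -(A + B * (y u) ^ ((3:ℝ)/4) - c * s * y u))
      (B := fun _ => -m) (B' := fun _ => (0:ℝ))
    · intro u hu
      exact ((hy u hu.1).continuousAt.neg).continuousWithinAt
    · intro u hu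
      exact ((hy u hu.1).neg).hasDerivWithinAt
    · simp only [hy0]
      have := min_le_left C (A / (c*s+1))
      simp only [hm] at *
      linarith
    · exact continuousOn_const
    · intro u hu
      exact (hasDerivAt_const u (-m)).hasDerivWithinAt
    · intro u hu heq
      have hyu : y u = m := by
        have := neg_injective heq
        simpa using this
      rw [hyu]
      have h1 : c*s*m ≤ c*s*(A/(c*s+1)) :=
        mul_le_mul_of_nonneg_left (min_le_right _ _) hcs
      have h2 : c*s*(A/(c*s+1)) < A := by
        rw [mul_div_assoc', div_lt_iff₀ hd]
        nlinarith
      have h3 : 0 ≤ B * m ^ ((3:ℝ)/4) := by positivity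
      have : 0 < A + B * m ^ ((3:ℝ)/4) - c*s*m := by linarith
      simpa using this
  have := key (Set.mem_Icc.mpr ⟨hT, le_refl T⟩)
  simp only at this
  linarith

/-- Comparison: `x' ≤ g(x)`, `y' = g(y)`, `x 0 ≤ y 0 = C` implies `x ≤ y`. -/
lemma aux_compare (A B c s C : ℝ) (hA : 0 < A) (hB : 0 < B) (hC : 0 < C) (hc : 0 < c)
    (hs : 0 ≤ s) (x y : ℝ → ℝ)
    (hxdiff : Differentiable ℝ x)
    (hxineq : ∀ t ≥ (0:ℝ), deriv x t ≤ A + B * (x t) ^ ((3:ℝ)/4) - c * s * x t)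
    (hx0 : x 0 ≤ C) (hy0 : y 0 = C)
    (hy : ∀ t ≥ (0:ℝ), HasDerivAt y (A + B * (y t) ^ ((3:ℝ)/4) - c * s * y t) t) :
    ∀ t ≥ (0:ℝ), x t ≤ y t := by
  have hcs : 0 ≤ c * s := mul_nonneg hc.le hs
  have hd : (0:ℝ) < c * s + 1 := by linarith
  have hm0 : 0 < min C (A / (c*s+1)) := lt_min hC (div_pos hA hd)
  set m := min C (A / (c*s+1)) with hm
  have hbar := aux_barrier A B c s C hA hB.le hC hcs y hy0 hy
  intro T hT
  apply le_of_forall_pos_le_add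
  intro ε hε
  have hm14 : 0 < m ^ ((1:ℝ)/4) := Real.rpow_pos_of_pos hm0 _
  set L := 3 / (4 * m ^ ((1:ℝ)/4)) * B + 1 with hL
  have hL0 : 0 < L := by positivity
  set ε₀ := ε / Real.exp (L * T) with hε₀
  have hε₀0 : 0 < ε₀ := div_pos hε (Real.exp_pos _)
  have key : ∀ ⦃u⦄, u ∈ Set.Icc (0:ℝ) T →
      x u ≤ (fun u => y u + ε₀ * Real.exp (L * u)) u := by
    apply image_le_of_deriv_right_lt_deriv_boundary'
      (f' := deriv x)
      (B := fun u => y u + ε₀ * Real.exp (L * u))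
      (B' := fun u => (A + B * (y u) ^ ((3:ℝ)/4) - c * s * y u)
        + ε₀ * (Real.exp (L * u) * L))
    · exact hxdiff.continuous.continuousOn
    · intro u hu
      exact (hxdiff u).hasDerivAt.hasDerivWithinAt
    · have h := mul_pos hε₀0 (Real.exp_pos (L * 0))
      have h2 : C ≤ y 0 := hy0.symm.le
      show x 0 ≤ y 0 + ε₀ * Real.exp (L * 0)
      linarith
    · intro u hu
      have hcont : Continuous fun w => ε₀ * Real.exp (L * w) := by fun_prop
      exact ((hy u hu.1).continuousAt.add hcont.continuousAt).continuousWithinAt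
    · intro u hu
      have h1 : HasDerivAt (fun w => ε₀ * Real.exp (L * w))
          (ε₀ * (Real.exp (L * u) * L)) u := by
        have h2 : HasDerivAt (fun w : ℝ => L * w) (L * 1) u :=
          (hasDerivAt_id u).const_mul L
        have h3 := h2.exp
        simpa [mul_one] using h3.const_mul ε₀
      exact ((hy u hu.1).add h1).hasDerivWithinAt
    · intro u hu heq
      set h := ε₀ * Real.exp (L * u) with hh
      have hh0 : 0 < h := mul_pos hε₀0 (Real.exp_pos _)
      have hyu : m ≤ y u := hbar u hu.1
      have hyu0 : 0 < y u := lt_of_lt_of_le hm0 hyu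
      have hxy : y u ≤ x u := by rw [heq]; linarith
      have hcon := aux_rpow_concave hyu0 hxy
      have hxmy : x u - y u = h := by rw [heq]; ring
      rw [hxmy] at hcon
      have hy14 : m ^ ((1:ℝ)/4) ≤ (y u) ^ ((1:ℝ)/4) :=
        Real.rpow_le_rpow hm0.le hyu (by norm_num)
      have hmono : 3 / (4 * (y u) ^ ((1:ℝ)/4)) ≤ 3 / (4 * m ^ ((1:ℝ)/4)) := by
        gcongr
      have hB34 : B * (x u) ^ ((3:ℝ)/4)
          ≤ B * (y u) ^ ((3:ℝ)/4) + (L - 1) * h := by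
        have e1 : 3 / (4 * (y u) ^ ((1:ℝ)/4)) * h ≤ 3 / (4 * m ^ ((1:ℝ)/4)) * h :=
          mul_le_mul_of_nonneg_right hmono hh0.le
        have e2 : (x u) ^ ((3:ℝ)/4) ≤ (y u) ^ ((3:ℝ)/4) + 3 / (4 * m ^ ((1:ℝ)/4)) * h := by
          linarith
        have e3 := mul_le_mul_of_nonneg_left e2 hB.le
        have e4 : (L - 1) * h = B * (3 / (4 * m ^ ((1:ℝ)/4)) * h) := by
          rw [hL]; ring
        rw [e4]
        linarith [e3]
      have hcsx : c * s * (y u) ≤ c * s * (x u) := mul_le_mul_of_nonneg_left hxy hcs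
      have hder := hxineq u hu.1
      have heq2 : ε₀ * (Real.exp (L * u) * L) = L * h := by rw [hh]; ring
      rw [heq2]
      linarith
  have hfinal := key (Set.mem_Icc.mpr ⟨hT, le_refl T⟩)
  simp only at hfinal
  rw [hε₀, div_mul_cancel₀ _ (Real.exp_pos (L*T)).ne'] at hfinal
  exact hfinal

/-- Quantitative bound for large `s = √n`: if `2B ≤ c s` then `s * x t ≤ 2C/(ct) + 2(A+B)/c`. -/
lemma aux_largeN (A B C c s t : ℝ) (hA : 0 < A) (hB : 0 < B) (hC : 0 < C) (hc : 0 < c)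
    (ht : 0 < t) (hcs : 2 * B ≤ c * s)
    (x : ℝ → ℝ)
    (hxnonneg : ∀ u ≥ (0:ℝ), 0 ≤ x u)
    (hxdiff : Differentiable ℝ x)
    (hxineq : ∀ u ≥ (0:ℝ), deriv x u ≤ A + B * (x u) ^ ((3:ℝ)/4) - c * s * x u)
    (hx0 : x 0 ≤ C) :
    s * x t ≤ 2 * C / (c * t) + 2 * (A + B) / c := by
  have hs0 : 0 < s := by nlinarith
  have hK : B - c * s ≤ -(c * s) / 2 := by linarith
  have hKneg : B - c * s < 0 := by nlinarith
  have hgron : ∀ u ∈ Set.Icc (0:ℝ) t,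
      x u ≤ gronwallBound C (B - c * s) (A + B) (u - 0) := by
    apply le_gronwallBound_of_liminf_deriv_right_le (f' := deriv x)
    · exact hxdiff.continuous.continuousOn
    · intro u hu r hr
      have hslope := ((hxdiff u).hasDerivAt.hasDerivWithinAt (s := Set.Ici u)).liminf_right_slope_le hr
      refine hslope.mono fun z hz => ?_
      rwa [slope_def_field, div_eq_inv_mul] at hz
    · exact hx0
    · intro u hu
      have h34 := aux_rpow_le_one_add (hxnonneg u hu.1)
      have hd := hxineq u hu.1
      have h2 := mul_le_mul_of_nonneg_left h34 hB.le
      nlinarith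
  have hXt := hgron t (Set.mem_Icc.mpr ⟨ht.le, le_refl t⟩)
  rw [sub_zero, gronwallBound_of_K_ne_0 hKneg.ne] at hXt
  set E := Real.exp ((B - c * s) * t) with hE
  have hE0 : 0 < E := Real.exp_pos _
  have hE1 : E ≤ 1 := by
    rw [hE]
    apply Real.exp_le_one_iff.mpr
    nlinarith
  -- bound on the second term
  have hterm2 : (A + B) / (B - c * s) * (E - 1) ≤ 2 * (A + B) / (c * s) := by
    have hden : 0 < c * s - B := by linarith
    have hcs0 : 0 < c * s := by positivity
    have hid : (A + B) / (B - c * s) * (E - 1) = (A + B) * (1 - E) / (c * s - B) := by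
      rw [div_mul_eq_mul_div, div_eq_div_iff hKneg.ne hden.ne']
      ring
    rw [hid]
    calc (A + B) * (1 - E) / (c * s - B) ≤ (A + B) * 1 / (c * s - B) := by
          gcongr <;> linarith
      _ ≤ (A + B) * 1 / (c * s / 2) := by
          gcongr <;> linarith
      _ = 2 * (A + B) / (c * s) := by
          rw [mul_one]
          field_simp
  -- bound on the first term: s * C * E ≤ 2C/(ct)
  have hexpbd : s * E ≤ 2 / (c * t) := by
    have hz : 0 < c * s * t / 2 := by positivity
    have hle : c * s * t / 2 ≤ Real.exp (c * s * t / 2) := by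
      have := Real.add_one_le_exp (c * s * t / 2)
      linarith
    have hEeq : E ≤ Real.exp (-(c * s * t / 2)) := by
      rw [hE]
      apply Real.exp_le_exp.mpr
      nlinarith
    have h2 : Real.exp (-(c * s * t / 2)) ≤ (c * s * t / 2)⁻¹ := by
      rw [Real.exp_neg]
      exact inv_anti₀ hz hle
    have h3 : s * E ≤ s * (c * s * t / 2)⁻¹ := by
      have := le_trans hEeq h2
      exact mul_le_mul_of_nonneg_left this hs0.le
    calc s * E ≤ s * (c * s * t / 2)⁻¹ := h3
      _ = 2 / (c * t) := by
          field_simp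
  have hxt0 : 0 ≤ x t := hxnonneg t ht.le
  -- assemble
  have step : s * x t ≤ s * (C * E) + s * ((A + B) / (B - c * s) * (E - 1)) := by
    have := mul_le_mul_of_nonneg_left hXt hs0.le
    calc s * x t ≤ s * (C * E + (A + B) / (B - c * s) * (E - 1)) := this
      _ = s * (C * E) + s * ((A + B) / (B - c * s) * (E - 1)) := by ring
  have st1 : s * (C * E) ≤ 2 * C / (c * t) := by
    have := mul_le_mul_of_nonneg_left hexpbd hC.le
    calc s * (C * E) = C * (s * E) := by ring
      _ ≤ C * (2 / (c * t)) := this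
      _ = 2 * C / (c * t) := by ring
  have st2 : s * ((A + B) / (B - c * s) * (E - 1)) ≤ 2 * (A + B) / c := by
    have h1 := mul_le_mul_of_nonneg_left hterm2 hs0.le
    have h2 : s * (2 * (A + B) / (c * s)) = 2 * (A + B) / c := by
      field_simp
    linarith [h1, h2.le, h2.ge]
  linarith


/-- ODE comparison for the differential inequality
`x' ≤ A + B x^{3/4} - c √N x`, `x(0) ≤ C`: any nonnegative differentiable family
`x_N` satisfying it is dominated by the solution `y_N` of the corresponding ODE,
and consequently `sup_N √N x_N(t) < ∞` for each fixed `t > 0`. -/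
theorem ode_comparison_sqrtN_bound
    (A B C c : ℝ) (hA : 0 < A) (hB : 0 < B) (hC : 0 < C) (hc : 0 < c)
    (x y : ℕ → ℝ → ℝ)
    (hxnonneg : ∀ n, ∀ t ≥ (0:ℝ), 0 ≤ x n t)
    (hxdiff : ∀ n, Differentiable ℝ (x n))
    (hxineq : ∀ n, ∀ t ≥ (0:ℝ),
      deriv (x n) t ≤
        A + B * (x n t) ^ ((3:ℝ) / 4) - c * Real.sqrt n * x n t)
    (hx0 : ∀ n, x n 0 ≤ C)
    (hy0 : ∀ n, y n 0 = C)
    (hyode : ∀ n, ∀ t ≥ (0:ℝ),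
      HasDerivAt (y n)
        (A + B * (y n t) ^ ((3:ℝ) / 4) - c * Real.sqrt n * y n t) t) :
    (∀ n : ℕ, ∀ t ≥ (0:ℝ), x n t ≤ y n t) ∧
    (∀ t > (0:ℝ), ∃ M : ℝ, ∀ n : ℕ, Real.sqrt n * x n t ≤ M) := by
  have part1 : ∀ n : ℕ, ∀ t ≥ (0:ℝ), x n t ≤ y n t := fun n =>
    aux_compare A B c (Real.sqrt n) C hA hB hC hc (Real.sqrt_nonneg (n:ℝ)) (x n) (y n)
      (hxdiff n) (hxineq n) (hx0 n) (hy0 n) (hyode n)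
  refine ⟨part1, ?_⟩
  intro t ht
  set n₀ : ℕ := ⌈(2*B/c)^2⌉₊ + 1 with hn₀
  obtain ⟨M₂, hM₂⟩ :=
    Finset.exists_le ((Finset.range n₀).image fun k : ℕ => Real.sqrt k * x k t)
  refine ⟨max (2*C/(c*t) + 2*(A+B)/c) M₂, fun n => ?_⟩
  by_cases hn : 2*B ≤ c * Real.sqrt n
  · exact le_trans
      (aux_largeN A B C c (Real.sqrt n) t hA hB hC hc ht hn (x n)
        (hxnonneg n) (hxdiff n) (hxineq n) (hx0 n))
      (le_max_left _ _)
  · have hnlt : n < n₀ := by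
      by_contra hcon
      push_neg at hcon
      apply hn
      have h1 : ((2*B/c)^2 : ℝ) ≤ (n:ℝ) := by
        calc ((2*B/c)^2 : ℝ) ≤ (⌈(2*B/c)^2⌉₊ : ℝ) := Nat.le_ceil _
          _ ≤ (n:ℝ) := Nat.cast_le.mpr (by omega)
      have h2 : 2*B/c ≤ Real.sqrt n := by
        rw [show (2*B/c : ℝ) = Real.sqrt ((2*B/c)^2) from
          (Real.sqrt_sq (by positivity)).symm]
        exact Real.sqrt_le_sqrt h1
      have h3 := (div_le_iff₀ hc).mp h2
      linarith [h3]
    exact le_trans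
      (hM₂ _ (Finset.mem_image_of_mem _ (Finset.mem_range.mpr hnlt)))
      (le_max_right _ _)
end
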